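/- arXiv:2209.09419 — 5 statements merged into one kernel-verified Lean document; each statement's English description precedes it below -/
import Mathlib

section
/- For any sequence of real numbers z_1, z_2, ..., z_n satisfying 0 ≤ z_k ≤ Z_{k-1} := max{1, z_1 + ... + z_{k-1}} for all k, the sum ∑_{k=1}^n z_k / √(Z_{k-1}) is at most (√2 + 1)·√(Z_n). -/
/-!
With `S k = z 0 + ⋯ + z (k-1)`, each term `z k / √(Z k)` is at most the increment of the
potential `Φ s = (√2 + 1) √(max 1 s) + min s 2` from `S k` to `S (k+1)`. Once `S k ≥ 1` this is
`z / √s ≤ (√2 + 1)(√(s + z) - √s)`, true because `√(s + z) + √s ≤ (√2 + 1) √s` when `z ≤ s`;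
before that `Z k = 1`, and the term `z k ≤ 1` is paid for by the `min s 2` part. Telescoping,
the sum is at most `Φ (S n) - Φ 0 ≤ (√2 + 1) √(Z n) + 2 - (√2 + 1)`.
-/

open Real

lemma div_sqrt_le_mul_sqrt_add_sub_sqrt {a z : ℝ} (ha : 0 < a) (hz₀ : 0 ≤ z) (hza : z ≤ a) :
    z / √a ≤ (√2 + 1) * (√(a + z) - √a) := by
  have hsa : 0 < √a := sqrt_pos.2 ha
  have hle : √a ≤ √(a + z) := sqrt_le_sqrt (by linarith)
  have hle_two : √(a + z) ≤ √2 * √a := by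
    rw [← sqrt_mul zero_le_two]
    exact sqrt_le_sqrt (by linarith)
  rw [div_le_iff₀ hsa]
  calc z = (√(a + z) - √a) * (√(a + z) + √a) := by
        linear_combination sq_sqrt ha.le - sq_sqrt (show 0 ≤ a + z by linarith)
    _ ≤ (√(a + z) - √a) * ((√2 + 1) * √a) :=
        mul_le_mul_of_nonneg_left (by linarith) (by linarith)
    _ = (√2 + 1) * (√(a + z) - √a) * √a := by ring

noncomputable def sqrtPotential (s : ℝ) : ℝ :=
  (√2 + 1) * √(max 1 s) + min s 2

lemma div_sqrt_max_le_sqrtPotential_sub {s z : ℝ} (hz₀ : 0 ≤ z) (hzs : z ≤ max 1 s) :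
    z / √(max 1 s) ≤ sqrtPotential (s + z) - sqrtPotential s := by
  unfold sqrtPotential
  rcases le_or_gt 1 s with hs | hs
  · have hmin : min s 2 ≤ min (s + z) 2 := min_le_min_right 2 (by linarith)
    rw [max_eq_right hs] at hzs ⊢
    rw [max_eq_right (by linarith)]
    linarith [div_sqrt_le_mul_sqrt_add_sub_sqrt (by linarith) hz₀ hzs]
  · rw [max_eq_left hs.le] at hzs ⊢
    have hsqrt : 1 ≤ √(max 1 (s + z)) := one_le_sqrt.2 (le_max_left _ _)
    rw [min_eq_left (by linarith), min_eq_left (by linarith), sqrt_one, div_one]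
    nlinarith [show 0 ≤ √2 + 1 by positivity]

/-- For any sequence of reals `z 0, ..., z (n-1)` with
`0 ≤ z k ≤ Z k := max 1 (z 0 + ... + z (k-1))`, the sum
`∑ z k / √(Z k)` is at most `(√2 + 1) * √(Z n)`. -/
theorem sum_div_sqrt_le (n : ℕ) (z : ℕ → ℝ) (Z : ℕ → ℝ)
    (hZ : ∀ k, Z k = max 1 (∑ i ∈ Finset.range k, z i))
    (hz : ∀ k < n, 0 ≤ z k ∧ z k ≤ Z k) :
    ∑ k ∈ Finset.range n, z k / Real.sqrt (Z k) ≤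
      (Real.sqrt 2 + 1) * Real.sqrt (Z n) := by
  set S : ℕ → ℝ := fun k => ∑ i ∈ Finset.range k, z i
  have hstep : ∀ k ∈ Finset.range n,
      z k / √(Z k) ≤ sqrtPotential (S (k + 1)) - sqrtPotential (S k) := by
    intro k hk
    obtain ⟨hz₀, hzZ⟩ := hz k (Finset.mem_range.1 hk)
    rw [hZ] at hzZ ⊢
    simpa only [S, Finset.sum_range_succ] using div_sqrt_max_le_sqrtPotential_sub hz₀ hzZ
  have hS0 : sqrtPotential (S 0) = √2 + 1 := by simp [S, sqrtPotential]
  have hSn : sqrtPotential (S n) ≤ (√2 + 1) * √(Z n) + 2 := by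
    rw [sqrtPotential, hZ]
    linarith [min_le_right (S n) 2]
  have hsqrt2 : 1 ≤ √2 := one_le_sqrt.2 one_le_two
  calc ∑ k ∈ Finset.range n, z k / √(Z k)
      ≤ ∑ k ∈ Finset.range n, (sqrtPotential (S (k + 1)) - sqrtPotential (S k)) :=
        Finset.sum_le_sum hstep
    _ = sqrtPotential (S n) - sqrtPotential (S 0) :=
        Finset.sum_range_sub (fun k => sqrtPotential (S k)) n
    _ ≤ (√2 + 1) * √(Z n) := by linarith
end

section
/- If ∑_{i=1}^{n-1} z_i ≤ 1 for a sequence of reals with 0 ≤ z_k ≤ Z_{k-1} := max{1, ∑_{i<k} z_i}, then ∑_{k=1}^n z_k/√(Z_{k-1}) ≤ (√2+1)·√(Z_n). -/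
/-! As long as the partial sums stay below `1`, every normaliser `Z k` with `k < n` equals `1`,
so the left-hand side is the plain sum `∑_{k<n-1} z k + z (n-1) ≤ 1 + Z (n-1) = 2`, while the
right-hand side is at least `√2 + 1 ≥ 2`. -/

open Finset

lemma sum_range_le_of_le_of_nonneg {z : ℕ → ℝ} {k m : ℕ} {c : ℝ} (hkm : k ≤ m)
    (hz : ∀ i < m, 0 ≤ z i) (hm : ∑ i ∈ range m, z i ≤ c) : ∑ i ∈ range k, z i ≤ c :=
  (sum_le_sum_of_subset_of_nonneg (range_subset_range.2 hkm)
    fun i hi _ => hz i (mem_range.1 hi)).trans hm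

lemma two_le_sqrt_two_add_one_mul_sqrt {x : ℝ} (hx : 1 ≤ x) : 2 ≤ (√2 + 1) * √x := by
  have h2 : 1 ≤ √2 := Real.one_le_sqrt.2 one_le_two
  have hx' : 1 ≤ √x := Real.one_le_sqrt.2 hx
  nlinarith

/-- Base case of the inequality: if `∑_{i<n-1} z i ≤ 1` for a sequence with
`0 ≤ z k ≤ Z k := max 1 (∑_{i<k} z i)`, then
`∑_{k<n} z k / √(Z k) ≤ (√2 + 1) * √(Z n)`. -/
theorem sum_div_sqrt_le_base (n : ℕ) (z : ℕ → ℝ) (Z : ℕ → ℝ)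
    (hZ : ∀ k, Z k = max 1 (∑ i ∈ Finset.range k, z i))
    (hz : ∀ k < n, 0 ≤ z k ∧ z k ≤ Z k)
    (hbase : ∑ i ∈ Finset.range (n - 1), z i ≤ 1) :
    ∑ k ∈ Finset.range n, z k / Real.sqrt (Z k) ≤
      (Real.sqrt 2 + 1) * Real.sqrt (Z n) := by
  refine le_trans ?_ (two_le_sqrt_two_add_one_mul_sqrt ((hZ n).symm ▸ le_max_left _ _))
  cases n with
  | zero => simp
  | succ m =>
    have hZ_eq_one : ∀ k ≤ m, Z k = 1 := fun k hk => by
      rw [hZ k, max_eq_left]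
      exact sum_range_le_of_le_of_nonneg hk (fun i hi => (hz i (by omega)).1) hbase
    have hzm : z m ≤ 1 := hZ_eq_one m le_rfl ▸ (hz m m.lt_succ_self).2
    calc ∑ k ∈ range (m + 1), z k / √(Z k) = ∑ k ∈ range (m + 1), z k :=
          sum_congr rfl fun k hk => by
            rw [hZ_eq_one k (Nat.lt_succ_iff.1 (mem_range.1 hk)), Real.sqrt_one, div_one]
      _ = ∑ k ∈ range m, z k + z m := sum_range_succ z m
      _ ≤ 2 := by simp only [Nat.add_sub_cancel] at hbase; linarith
end

section
/- (Sufficient Planning Horizon) If T ≥ Dμ*/Δ, then for every starting node s_0 there exists an admissible path s_{0:T} of length T that achieves the optimal cumulative expected reward V(s_0, T) and whose terminal node satisfies μ_{s_T} = μ*. Moreover, if T > Dμ*/Δ, then every optimal path of length T from s_0 ends at a node with mean reward μ*. -/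
open Finset
open scoped ENNReal

/-- A path `p` is admissible up to time `T` if consecutive nodes are adjacent. -/
def Adm {S : Type*} (adj : S → S → Prop) (p : ℕ → S) (T : ℕ) : Prop :=
  ∀ t < T, adj (p t) (p (t + 1))

/-- Cumulative expected reward of the path `p 0, p 1, ..., p T`. -/
noncomputable def Vpath {S : Type*} (μ : S → ℝ) (p : ℕ → S) (T : ℕ) : ℝ :=
  ∑ t ∈ Finset.range (T + 1), μ (p t)

/-- Optimal `T`-step cumulative expected reward starting from node `s`. -/
noncomputable def Vopt {S : Type*} (adj : S → S → Prop) (μ : S → ℝ) (s : S) (T : ℕ) : ℝ :=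
  sSup {v | ∃ p : ℕ → S, p 0 = s ∧ Adm adj p T ∧ Vpath μ p T = v}

/-- Infinite-horizon undiscounted regret (total cost) of a stationary policy `π`
starting from node `s`, as a limit (`tsum` of the nonnegative costs). -/
noncomputable def Rinf {S : Type*} (μ : S → ℝ) (μstar : ℝ) (π : S → S) (s : S) : ℝ≥0∞ :=
  ∑' t : ℕ, ENNReal.ofReal (μstar - μ (π^[t] s))

/-- The sufficient planning horizon `T_G = ⌈D μ* / Δ⌉`. -/
noncomputable def TG (D : ℕ) (μstar Δ : ℝ) : ℕ :=
  Nat.ceil ((D : ℝ) * μstar / Δ)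

/-! An optimal path that never visits a node of mean `μ*` earns at most `(T + 1)(μ* - Δ)`, whereas
walking to such a node in at most `D` steps and staying there earns at least `(T + 1 - D) μ*`;
when `D μ* ≤ T Δ` the latter is larger, so every optimal path visits a best node. Freezing the
path at that visit loses nothing, and gains strictly if the path ended at a worse node. -/

section StopAt

variable {S : Type*}

def stopAt (p : ℕ → S) (t₀ : ℕ) : ℕ → S := fun t => p (min t t₀)

lemma stopAt_zero (p : ℕ → S) (t₀ : ℕ) : stopAt p t₀ 0 = p 0 := by
  simp [stopAt]

lemma stopAt_of_le {p : ℕ → S} {t₀ t : ℕ} (h : t₀ ≤ t) : stopAt p t₀ t = p t₀ := by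
  simp [stopAt, min_eq_right h]

lemma adm_stopAt {adj : S → S → Prop} (hrefl : ∀ s, adj s s) {p : ℕ → S} {t₀ : ℕ}
    (hp : Adm adj p t₀) (T : ℕ) : Adm adj (stopAt p t₀) T := by
  intro t _
  rcases lt_or_ge t t₀ with h | h
  · simpa [stopAt, min_eq_left h.le, min_eq_left (Nat.succ_le_of_lt h)] using hp t h
  · simpa [stopAt_of_le h, stopAt_of_le (h.trans t.le_succ)] using hrefl (p t₀)

variable {μ : S → ℝ}

lemma le_stopAt {p : ℕ → S} {t₀ : ℕ} (hmax : ∀ s, μ s ≤ μ (p t₀)) (t : ℕ) :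
    μ (p t) ≤ μ (stopAt p t₀ t) := by
  rcases le_total t t₀ with h | h
  · simp [stopAt, min_eq_left h]
  · simpa [stopAt_of_le h] using hmax (p t)

lemma Vpath_le_Vpath_stopAt {p : ℕ → S} {t₀ : ℕ} (hmax : ∀ s, μ s ≤ μ (p t₀)) (T : ℕ) :
    Vpath μ p T ≤ Vpath μ (stopAt p t₀) T :=
  sum_le_sum fun t _ => le_stopAt hmax t

lemma Vpath_lt_Vpath_stopAt {p : ℕ → S} {t₀ T : ℕ} (hmax : ∀ s, μ s ≤ μ (p t₀))
    (ht₀ : t₀ ≤ T) (hT : μ (p T) < μ (p t₀)) :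
    Vpath μ p T < Vpath μ (stopAt p t₀) T :=
  sum_lt_sum (fun t _ => le_stopAt hmax t) ⟨T, self_mem_range_succ T, by rwa [stopAt_of_le ht₀]⟩

lemma mul_le_Vpath_stopAt (hμ0 : ∀ s, 0 ≤ μ s) (p : ℕ → S) (d T : ℕ) :
    ((T : ℝ) + 1 - d) * μ (p d) ≤ Vpath μ (stopAt p d) T := by
  have hcard : (T : ℝ) + 1 - d ≤ ((T + 1 - d : ℕ) : ℝ) := by
    rw [sub_le_iff_le_add]
    exact_mod_cast le_tsub_add
  calc ((T : ℝ) + 1 - d) * μ (p d)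
      ≤ ((T + 1 - d : ℕ) : ℝ) * μ (p d) := mul_le_mul_of_nonneg_right hcard (hμ0 _)
    _ = ∑ t ∈ Ico d (T + 1), μ (stopAt p d t) := by
      rw [sum_congr rfl fun t ht => by rw [stopAt_of_le (mem_Ico.1 ht).1], sum_const,
        Nat.card_Ico, nsmul_eq_mul]
    _ ≤ Vpath μ (stopAt p d) T :=
      sum_le_sum_of_subset_of_nonneg (fun t ht => mem_range.2 (mem_Ico.1 ht).2)
        fun _ _ _ => hμ0 _

lemma Vpath_le_mul {p : ℕ → S} {T : ℕ} {c : ℝ} (h : ∀ t ≤ T, μ (p t) ≤ c) :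
    Vpath μ p T ≤ ((T : ℝ) + 1) * c := by
  have := sum_le_sum fun t ht => h t (Nat.lt_succ_iff.1 (mem_range.1 ht))
  simpa [Vpath] using this

end StopAt

section Vopt

variable {S : Type*} [Fintype S] {adj : S → S → Prop} {μ : S → ℝ}

lemma finite_setOf_Vpath (adj : S → S → Prop) (μ : S → ℝ) (s : S) (T : ℕ) :
    {v | ∃ p : ℕ → S, p 0 = s ∧ Adm adj p T ∧ Vpath μ p T = v}.Finite := by
  refine (Set.finite_range fun g : Fin (T + 1) → S => ∑ i, μ (g i)).subset ?_
  rintro v ⟨p, -, -, rfl⟩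
  exact ⟨fun i => p i, (sum_range fun t => μ (p t)).symm⟩

lemma Vpath_le_Vopt {s : S} {p : ℕ → S} {T : ℕ} (hp0 : p 0 = s) (hp : Adm adj p T) :
    Vpath μ p T ≤ Vopt adj μ s T :=
  le_csSup (finite_setOf_Vpath adj μ s T).bddAbove ⟨p, hp0, hp, rfl⟩

lemma exists_Vpath_eq_Vopt (hrefl : ∀ s, adj s s) (s : S) (T : ℕ) :
    ∃ p : ℕ → S, p 0 = s ∧ Adm adj p T ∧ Vpath μ p T = Vopt adj μ s T :=
  Set.Nonempty.csSup_mem (s := {v | ∃ p : ℕ → S, p 0 = s ∧ Adm adj p T ∧ Vpath μ p T = v})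
    ⟨_, fun _ => s, rfl, fun _ _ => hrefl s, rfl⟩ (finite_setOf_Vpath adj μ s T)

lemma exists_eq_max_of_Vpath_eq_Vopt (hrefl : ∀ s, adj s s) (hμ0 : ∀ s, 0 ≤ μ s)
    {μstar Δ : ℝ} (hmax : ∀ s, μ s ≤ μstar) (hΔ : 0 < Δ)
    (hgap : ∀ s, μ s < μstar → μ s ≤ μstar - Δ) {s : S} {r : ℕ → S} {d D : ℕ}
    (hr0 : r 0 = s) (hr : Adm adj r d) (hrd : μ (r d) = μstar) (hdD : d ≤ D)
    {p : ℕ → S} {T : ℕ} (hT : (D : ℝ) * μstar ≤ T * Δ)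
    (hopt : Vpath μ p T = Vopt adj μ s T) : ∃ t ≤ T, μ (p t) = μstar := by
  by_contra! hnever
  have hlow : ((T : ℝ) + 1 - d) * μstar ≤ Vopt adj μ s T :=
    hrd ▸ (mul_le_Vpath_stopAt hμ0 r d T).trans
      (Vpath_le_Vopt (by rw [stopAt_zero, hr0]) (adm_stopAt hrefl hr T))
  have hup : Vpath μ p T ≤ ((T : ℝ) + 1) * (μstar - Δ) :=
    Vpath_le_mul fun t ht => hgap _ ((hmax _).lt_of_ne (hnever t ht))
  have hstar : 0 ≤ μstar := hrd ▸ hμ0 _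
  have hdD' : (d : ℝ) * μstar ≤ D * μstar :=
    mul_le_mul_of_nonneg_right (by exact_mod_cast hdD) hstar
  nlinarith

end Vopt

theorem sufficient_planning_horizon_general {S : Type*} [Fintype S]
    (adj : S → S → Prop) (hrefl : ∀ s, adj s s)
    (μ : S → ℝ) (hμ0 : ∀ s, 0 ≤ μ s)
    (μstar : ℝ) (hmax : ∀ s, μ s ≤ μstar) (hex : ∃ s, μ s = μstar)
    (Δ : ℝ) (hΔ : 0 < Δ) (hgap : ∀ s, μ s < μstar → μ s ≤ μstar - Δ)
    (D : ℕ)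
    (hD : ∀ s s' : S, ∃ (T : ℕ) (p : ℕ → S),
      T ≤ D ∧ p 0 = s ∧ p T = s' ∧ Adm adj p T)
    (T : ℕ) :
    (((D : ℝ) * μstar / Δ ≤ (T : ℝ)) →
      ∀ s0 : S, ∃ p : ℕ → S, p 0 = s0 ∧ Adm adj p T ∧
        Vpath μ p T = Vopt adj μ s0 T ∧ μ (p T) = μstar) ∧
    (((D : ℝ) * μstar / Δ < (T : ℝ)) →
      ∀ (s0 : S) (p : ℕ → S), p 0 = s0 → Adm adj p T →
        Vpath μ p T = Vopt adj μ s0 T → μ (p T) = μstar) := by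
  obtain ⟨sstar, hsstar⟩ := hex
  have visits (s0 : S) (p : ℕ → S) (hT : (D : ℝ) * μstar / Δ ≤ T)
      (hopt : Vpath μ p T = Vopt adj μ s0 T) : ∃ t₀ ≤ T, μ (p t₀) = μstar := by
    obtain ⟨d, r, hdD, hr0, hrd, hr⟩ := hD s0 sstar
    exact exists_eq_max_of_Vpath_eq_Vopt hrefl hμ0 hmax hΔ hgap hr0 hr (hrd ▸ hsstar) hdD
      ((div_le_iff₀ hΔ).1 hT) hopt
  have hmax_at {p : ℕ → S} {t₀ : ℕ} (h : μ (p t₀) = μstar) : ∀ s, μ s ≤ μ (p t₀) :=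
    h ▸ hmax
  have stopAt_adm {s0 : S} {p : ℕ → S} {t₀ : ℕ} (hp0 : p 0 = s0) (hp : Adm adj p T)
      (ht₀ : t₀ ≤ T) : stopAt p t₀ 0 = s0 ∧ Adm adj (stopAt p t₀) T :=
    ⟨by rw [stopAt_zero, hp0], adm_stopAt hrefl (fun t ht => hp t (ht.trans_le ht₀)) T⟩
  refine ⟨fun hT s0 => ?_, fun hT s0 p hp0 hp hopt => ?_⟩
  · obtain ⟨p, hp0, hp, hopt⟩ := exists_Vpath_eq_Vopt hrefl s0 T
    obtain ⟨t₀, ht₀, hpt₀⟩ := visits s0 p hT hopt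
    obtain ⟨hq0, hq⟩ := stopAt_adm hp0 hp ht₀
    refine ⟨stopAt p t₀, hq0, hq, (Vpath_le_Vopt hq0 hq).antisymm ?_, by rwa [stopAt_of_le ht₀]⟩
    exact hopt ▸ Vpath_le_Vpath_stopAt (hmax_at hpt₀) T
  · obtain ⟨t₀, ht₀, hpt₀⟩ := visits s0 p hT.le hopt
    obtain ⟨hq0, hq⟩ := stopAt_adm hp0 hp ht₀
    by_contra hend
    exact (Vpath_lt_Vpath_stopAt (hmax_at hpt₀) ht₀ (hpt₀ ▸ (hmax _).lt_of_ne hend)).not_ge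
      (hopt ▸ Vpath_le_Vopt hq0 hq)

/-- Sufficient Planning Horizon: if `T ≥ D μ* / Δ` then from every start node
there is an optimal path of length `T` ending in a node of maximal mean reward;
if moreover `T > D μ* / Δ` then every optimal path of length `T` ends in a node
of maximal mean reward. -/
theorem sufficient_planning_horizon {S : Type*} [Fintype S] [Nonempty S]
    (adj : S → S → Prop) (hrefl : ∀ s, adj s s) (hsymm : ∀ s t, adj s t → adj t s)
    (μ : S → ℝ) (hμ0 : ∀ s, 0 ≤ μ s)
    (μstar : ℝ) (hmax : ∀ s, μ s ≤ μstar) (hex : ∃ s, μ s = μstar)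
    (Δ : ℝ) (hΔ : 0 < Δ) (hgap : ∀ s, μ s < μstar → μ s ≤ μstar - Δ)
    (D : ℕ)
    (hD : ∀ s s' : S, ∃ (T : ℕ) (p : ℕ → S),
      T ≤ D ∧ p 0 = s ∧ p T = s' ∧ Adm adj p T)
    (T : ℕ) :
    (((D : ℝ) * μstar / Δ ≤ (T : ℝ)) →
      ∀ s0 : S, ∃ p : ℕ → S, p 0 = s0 ∧ Adm adj p T ∧
        Vpath μ p T = Vopt adj μ s0 T ∧ μ (p T) = μstar) ∧
    (((D : ℝ) * μstar / Δ < (T : ℝ)) →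
      ∀ (s0 : S) (p : ℕ → S), p 0 = s0 → Adm adj p T →
        Vpath μ p T = Vopt adj μ s0 T → μ (p T) = μstar) :=
  sufficient_planning_horizon_general adj hrefl μ hμ0 μstar hmax hex Δ hΔ hgap D hD T
end

section
/- (Bounded Termination) Any admissible path s_{0:T} achieving the optimal value V(s_0,T) enters its terminal nodes in at most |S| − 1 steps; i.e., its terminal step K satisfies K ≤ |S| − 1, so μ_{s_t} = μ_{s_T} for all t ∈ [|S|−1, T]. Moreover, the nodes s_0, s_1, ..., s_K up to the terminal step are pairwise distinct. -/
open Finset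
open scoped ENNReal

/-! On an optimal path no mean can exceed all of the later ones: truncating the path there and
staying put (the self-loops allow it) would do strictly better. Hence `μ (p T)` is the largest mean
along the path, and a step attaining it is followed only by such steps, so every step before the
terminal step `K` is strictly below `μ (p T)`. A repeated node `p l = p h` with `h ≤ K` then yields
a strictly better path: erase the loop `p l, …, p (h - 1)` and spend the `h - l` saved steps at the
final node. Hence `p 0, …, p K` are distinct, and `K + 1 ≤ |S|` by pigeonhole. -/

theorem Adm.mono {S : Type*} {adj : S → S → Prop} {p : ℕ → S} {t T : ℕ} (hp : Adm adj p T)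
    (ht : t ≤ T) : Adm adj p t :=
  fun i hi => hp i (hi.trans_le ht)

theorem vpath_eq_vpath_add_sum_Ico {S : Type*} (μ : S → ℝ) (p : ℕ → S) {t T : ℕ} (ht : t ≤ T) :
    Vpath μ p T = Vpath μ p t + ∑ i ∈ Ico (t + 1) (T + 1), μ (p i) :=
  (sum_range_add_sum_Ico _ (by omega)).symm

theorem vpath_le_vopt {S : Type*} [Finite S] {adj : S → S → Prop} (μ : S → ℝ) {q : ℕ → S}
    {T : ℕ} (hq : Adm adj q T) : Vpath μ q T ≤ Vopt adj μ (q 0) T := by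
  obtain ⟨M, hM⟩ := Finite.bddAbove_range μ
  refine le_csSup ⟨(T + 1) * M, ?_⟩ ⟨q, rfl, hq, rfl⟩
  rintro _ ⟨r, -, -, rfl⟩
  calc Vpath μ r T ≤ ∑ _t ∈ range (T + 1), M := sum_le_sum fun t _ => hM ⟨r t, rfl⟩
    _ = (T + 1) * M := by simp

def truncate {S : Type*} (p : ℕ → S) (t : ℕ) : ℕ → S :=
  fun i => p (min i t)

@[simp]
theorem truncate_zero {S : Type*} (p : ℕ → S) (t : ℕ) : truncate p t 0 = p 0 := by
  simp [truncate]

theorem Adm.truncate {S : Type*} {adj : S → S → Prop} (hrefl : ∀ s, adj s s) {p : ℕ → S}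
    {t : ℕ} (hp : Adm adj p t) (T : ℕ) : Adm adj (truncate p t) T := by
  intro i _
  rcases lt_or_ge i t with hit | hti
  · simpa [_root_.truncate, hit.le, Nat.succ_le_of_lt hit] using hp i hit
  · simpa [_root_.truncate, hti, hti.trans i.le_succ] using hrefl (p t)

theorem vpath_truncate {S : Type*} (μ : S → ℝ) (p : ℕ → S) {t T : ℕ} (ht : t ≤ T) :
    Vpath μ (truncate p t) T = Vpath μ p t + (T - t : ℕ) * μ (p t) := by
  rw [vpath_eq_vpath_add_sum_Ico μ _ ht]
  congr 1
  · exact sum_congr rfl fun i hi => by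
      rw [truncate, min_eq_left (Nat.lt_succ_iff.1 (mem_range.1 hi))]
  · rw [sum_congr rfl fun i hi => by
      rw [truncate, min_eq_right (Nat.succ_le_iff.1 (mem_Ico.1 hi).1).le]]
    simp

def eraseLoop {S : Type*} (p : ℕ → S) (l h : ℕ) : ℕ → S :=
  fun i => if i < l then p i else p (i + (h - l))

theorem eraseLoop_zero {S : Type*} {p : ℕ → S} {l h : ℕ} (hloop : p l = p h) :
    eraseLoop p l h 0 = p 0 := by
  rcases Nat.eq_zero_or_pos l with rfl | hl
  · simp [eraseLoop, hloop]
  · simp [eraseLoop, hl]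

theorem eraseLoop_sub {S : Type*} (p : ℕ → S) {l h T : ℕ} (hlh : l ≤ h) (hhT : h ≤ T) :
    eraseLoop p l h (T - (h - l)) = p T := by
  rw [eraseLoop, if_neg (by omega), Nat.sub_add_cancel (by omega)]

theorem Adm.eraseLoop {S : Type*} {adj : S → S → Prop} {p : ℕ → S} {l h T : ℕ}
    (hp : Adm adj p T) (hlh : l ≤ h) (hhT : h ≤ T) (hloop : p l = p h) :
    Adm adj (eraseLoop p l h) (T - (h - l)) := by
  intro i hi
  simp only [_root_.eraseLoop]
  rcases lt_trichotomy (i + 1) l with hil | hil | hli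
  · rw [if_pos (by omega), if_pos hil]
    exact hp i (by omega)
  · rw [if_pos (by omega), if_neg (by omega), hil, Nat.add_sub_of_le hlh, ← hloop, ← hil]
    exact hp i (by omega)
  · rw [if_neg (by omega), if_neg (by omega), Nat.add_right_comm]
    exact hp (i + (h - l)) (by omega)

theorem vpath_eraseLoop {S : Type*} (μ : S → ℝ) (p : ℕ → S) {l h T : ℕ} (hlh : l ≤ h)
    (hhT : h ≤ T) :
    Vpath μ (eraseLoop p l h) (T - (h - l)) + ∑ i ∈ Ico l h, μ (p i) = Vpath μ p T := by
  have hkept : ∑ i ∈ Ico l (T - (h - l) + 1), μ (eraseLoop p l h i)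
      = ∑ i ∈ Ico h (T + 1), μ (p i) := by
    rw [sum_congr rfl fun i hi => by rw [eraseLoop, if_neg (not_lt.2 (mem_Ico.1 hi).1)],
      sum_Ico_add' (fun i => μ (p i)), show l + (h - l) = h by omega,
      show T - (h - l) + 1 + (h - l) = T + 1 by omega]
  have hprefix : ∑ i ∈ range l, μ (eraseLoop p l h i) = ∑ i ∈ range l, μ (p i) :=
    sum_congr rfl fun i hi => by rw [eraseLoop, if_pos (mem_range.1 hi)]
  rw [Vpath, Vpath, ← sum_range_add_sum_Ico _ (show l ≤ T - (h - l) + 1 by omega), hkept,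
    hprefix, ← sum_range_add_sum_Ico _ (show l ≤ T + 1 by omega),
    ← sum_Ico_consecutive _ hlh (show h ≤ T + 1 by omega)]
  ring

section OptimalPath

variable {S : Type*} [Finite S] {adj : S → S → Prop} {μ : S → ℝ} {p : ℕ → S} {T : ℕ}

theorem mul_le_sum_Ico_of_vpath_eq_vopt (hrefl : ∀ s, adj s s) (hp : Adm adj p T)
    (hopt : Vpath μ p T = Vopt adj μ (p 0) T) {t : ℕ} (ht : t ≤ T) :
    (T - t : ℕ) * μ (p t) ≤ ∑ i ∈ Ico (t + 1) (T + 1), μ (p i) := by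
  have h := vpath_le_vopt μ ((hp.mono ht).truncate hrefl T)
  rw [vpath_truncate μ p ht, truncate_zero, ← hopt, vpath_eq_vpath_add_sum_Ico μ p ht] at h
  linarith

theorem mul_le_sum_loop_of_vpath_eq_vopt (hrefl : ∀ s, adj s s) (hp : Adm adj p T)
    (hopt : Vpath μ p T = Vopt adj μ (p 0) T) {l h : ℕ} (hlh : l ≤ h) (hhT : h ≤ T)
    (hloop : p l = p h) :
    (h - l : ℕ) * μ (p T) ≤ ∑ i ∈ Ico l h, μ (p i) := by
  have hle := vpath_le_vopt μ ((hp.eraseLoop hlh hhT hloop).truncate hrefl T)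
  rw [vpath_truncate μ _ (Nat.sub_le T _), eraseLoop_sub p hlh hhT,
    show T - (T - (h - l)) = h - l by omega, truncate_zero,
    eraseLoop_zero hloop, ← hopt] at hle
  linarith [vpath_eraseLoop μ p hlh hhT]

end OptimalPath

section RealSequence

variable {a : ℕ → ℝ} {T : ℕ}

theorem le_of_forall_mul_le_sum_Ico
    (ha : ∀ t ≤ T, (T - t : ℕ) * a t ≤ ∑ i ∈ Ico (t + 1) (T + 1), a i) {t : ℕ} (ht : t ≤ T) :
    a t ≤ a T := by
  suffices ∀ i, t ≤ i → i ≤ T → a i ≤ a T from this t le_rfl ht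
  induction ht using Nat.decreasingInduction with
  | self => intro i hTi hiT; rw [le_antisymm hiT hTi]
  | of_succ k hk ih =>
    intro i hki hiT
    rcases hki.eq_or_lt with rfl | hki
    · have hsum : ∑ j ∈ Ico (k + 1) (T + 1), a j ≤ (T - k : ℕ) * a T := by
        simpa using sum_le_card_nsmul _ _ _ fun j hj =>
          ih j (mem_Ico.1 hj).1 (Nat.lt_succ_iff.1 (mem_Ico.1 hj).2)
      have hpos : (0 : ℝ) < (T - k : ℕ) := by exact_mod_cast Nat.sub_pos_of_lt hk
      exact le_of_mul_le_mul_left ((ha k hiT).trans hsum) hpos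
    · exact ih i hki hiT

theorem eq_of_forall_mul_le_sum_Ico
    (ha : ∀ t ≤ T, (T - t : ℕ) * a t ≤ ∑ i ∈ Ico (t + 1) (T + 1), a i) {t : ℕ} (ht : t ≤ T)
    (hteq : a t = a T) {i : ℕ} (hti : t ≤ i) (hiT : i ≤ T) : a i = a T := by
  rcases hti.eq_or_lt with rfl | hti
  · exact hteq
  have hle : ∀ j ∈ Ico (t + 1) (T + 1), a j ≤ a T := fun j hj =>
    le_of_forall_mul_le_sum_Ico ha (Nat.lt_succ_iff.1 (mem_Ico.1 hj).2)
  have hsum : ∑ j ∈ Ico (t + 1) (T + 1), a j = ∑ _j ∈ Ico (t + 1) (T + 1), a T := by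
    refine le_antisymm (sum_le_sum hle) ?_
    simpa [← hteq] using ha t ht
  exact (sum_eq_sum_iff_of_le hle).1 hsum i (mem_Ico.2 ⟨hti, by omega⟩)

theorem lt_of_forall_mul_le_sum_Ico
    (ha : ∀ t ≤ T, (T - t : ℕ) * a t ≤ ∑ i ∈ Ico (t + 1) (T + 1), a i) {K : ℕ} (hKT : K ≤ T)
    (hKmin : ∀ k < K, ¬ ∀ t, k ≤ t → t ≤ T → a t = a k) {t : ℕ} (htK : t < K) :
    a t < a T := by
  have ht : t ≤ T := by omega
  refine (le_of_forall_mul_le_sum_Ico ha ht).lt_of_ne fun hteq => hKmin t htK fun i hti hiT => ?_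
  rw [eq_of_forall_mul_le_sum_Ico ha ht hteq hti hiT, hteq]

end RealSequence

theorem add_one_le_card_of_forall_lt_ne {S : Type*} [Fintype S] {p : ℕ → S} {K : ℕ}
    (hp : ∀ l h : ℕ, l < h → h ≤ K → p l ≠ p h) : K + 1 ≤ Fintype.card S := by
  have hinj : Function.Injective fun i : Fin (K + 1) => p i := by
    intro i j hij
    by_contra hne
    rcases lt_or_gt_of_ne (Fin.val_injective.ne hne) with h | h
    · exact hp i j h j.is_le hij
    · exact hp j i h i.is_le hij.symm
  simpa using Fintype.card_le_of_injective _ hinj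

theorem bounded_termination_general {S : Type*} [Fintype S]
    (adj : S → S → Prop) (hrefl : ∀ s, adj s s)
    (μ : S → ℝ) (T : ℕ) (s0 : S) (p : ℕ → S)
    (hp0 : p 0 = s0) (hadm : Adm adj p T)
    (hopt : Vpath μ p T = Vopt adj μ s0 T)
    (K : ℕ) (hKT : K ≤ T)
    (hKterm : ∀ t, K ≤ t → t ≤ T → μ (p t) = μ (p K))
    (hKmin : ∀ k < K, ¬ (∀ t, k ≤ t → t ≤ T → μ (p t) = μ (p k))) :
    K ≤ Fintype.card S - 1 ∧
    (∀ t, Fintype.card S - 1 ≤ t → t ≤ T → μ (p t) = μ (p T)) ∧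
    (∀ l h : ℕ, l < h → h ≤ K → p l ≠ p h) := by
  subst hp0
  have hbelow : ∀ t < K, μ (p t) < μ (p T) := fun t =>
    lt_of_forall_mul_le_sum_Ico (fun t => mul_le_sum_Ico_of_vpath_eq_vopt hrefl hadm hopt)
      hKT hKmin
  have hdistinct : ∀ l h : ℕ, l < h → h ≤ K → p l ≠ p h := by
    intro l h hlh hhK hloop
    have hle := mul_le_sum_loop_of_vpath_eq_vopt hrefl hadm hopt hlh.le (hhK.trans hKT) hloop
    have hlt : ∑ i ∈ Ico l h, μ (p i) < (h - l : ℕ) * μ (p T) := by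
      simpa using sum_lt_sum_of_nonempty (nonempty_Ico.2 hlh) fun i hi =>
        hbelow i ((mem_Ico.1 hi).2.trans_le hhK)
    linarith
  have hcard := add_one_le_card_of_forall_lt_ne hdistinct
  refine ⟨by omega, fun t ht htT => ?_, hdistinct⟩
  rw [hKterm t (by omega) htT, hKterm T hKT le_rfl]

/-- Bounded Termination: any optimal path enters its terminal nodes within
`|S| - 1` steps, and the nodes up to the terminal step are pairwise distinct. -/
theorem bounded_termination {S : Type*} [Fintype S] [Nonempty S]
    (adj : S → S → Prop) (hrefl : ∀ s, adj s s) (hsymm : ∀ s t, adj s t → adj t s)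
    (μ : S → ℝ) (T : ℕ) (s0 : S) (p : ℕ → S)
    (hp0 : p 0 = s0) (hadm : Adm adj p T)
    (hopt : Vpath μ p T = Vopt adj μ s0 T)
    (K : ℕ) (hKT : K ≤ T)
    (hKterm : ∀ t, K ≤ t → t ≤ T → μ (p t) = μ (p K))
    (hKmin : ∀ k < K, ¬ (∀ t, k ≤ t → t ≤ T → μ (p t) = μ (p k))) :
    K ≤ Fintype.card S - 1 ∧
    (∀ t, Fintype.card S - 1 ≤ t → t ≤ T → μ (p t) = μ (p T)) ∧
    (∀ l h : ℕ, l < h → h ≤ K → p l ≠ p h) :=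
  bounded_termination_general adj hrefl μ T s0 p hp0 hadm hopt K hKT hKterm hKmin
end

section
/- If a stationary policy π minimizes the infinite-horizon undiscounted regret R_∞(π, s) = lim_{T→∞} ∑_{t=0}^T (μ* − μ_{s_t}) from start node s, then π achieves the optimal cumulative reward V(s, T) for every finite horizon T ≥ T_G + |S|, where T_G = ⌈Dμ*/Δ⌉. -/
open Finset
open scoped ENNReal

/-
Any admissible walk from `s` to an optimal node can be turned into a policy: erase its loops,
which only removes nonnegative regret terms, follow the resulting simple path and then stay put.
Hence the optimal `R_∞(π, s)` is at most the regret of every such walk; walking to the nearest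
optimal node gives `R_∞(π, s) ≤ D μ*`. Finite total regret forces the eventually periodic orbit of `π` to be optimal
after `|S|` steps, so `R_∞(π, s)` is the regret of the first `T + 1` steps. A `T`-step path that
never meets an optimal node pays at least `(T + 1) Δ > D μ*`, and one that does is no better than
the walk to its first optimal node.
-/

open Function

lemma exists_lt_le_eq_of_not_injOn {α : Type*} {g : ℕ → α} {n : ℕ}
    (h : ¬ Set.InjOn g (Set.Iic n)) : ∃ i j, i < j ∧ j ≤ n ∧ g i = g j := by
  simp only [Set.InjOn, Set.mem_Iic, not_forall] at h
  obtain ⟨a, ha, b, hb, hab, hne⟩ := h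
  rcases lt_or_gt_of_ne hne with h | h
  exacts [⟨a, b, h, hb, hab⟩, ⟨b, a, h, ha, hab.symm⟩]

lemma iterate_mem_periodicPts_of_card_le {α : Type*} [Fintype α] (f : α → α) (x : α) {t : ℕ}
    (ht : Fintype.card α ≤ t) : f^[t] x ∈ periodicPts f := by
  have hninj : ¬ Set.InjOn (f^[·] x) (Set.Iic (Fintype.card α)) := fun hinj => by
    have := Finset.card_le_card_of_injOn (f^[·] x) (fun _ _ => Finset.mem_univ _)
      (by rwa [Finset.coe_Iic])
    simp at this
  obtain ⟨i, j, hij, hj, hloop⟩ := exists_lt_le_eq_of_not_injOn hninj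
  have hper : IsPeriodicPt f (j - i) (f^[i] x) := by
    rw [IsPeriodicPt, IsFixedPt, ← iterate_add_apply, Nat.sub_add_cancel hij.le, ← hloop]
  have hper_t := hper.apply_iterate (t - i)
  rw [← iterate_add_apply, Nat.sub_add_cancel (by omega)] at hper_t
  exact mk_mem_periodicPts (by omega) hper_t

/-- From time `card α` on the orbit is periodic, so each later term recurs infinitely often. -/
lemma iterate_eq_zero_of_tsum_ne_top {α : Type*} [Fintype α] (f : α → α) (x : α)
    {g : α → ℝ≥0∞} (hg : ∑' n, g (f^[n] x) ≠ ⊤) {t : ℕ} (ht : Fintype.card α ≤ t) :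
    g (f^[t] x) = 0 := by
  obtain ⟨d, hd, hper⟩ := mem_periodicPts.1 (iterate_mem_periodicPts_of_card_le f x ht)
  have hrec : ∀ m, f^[t + d * m] x = f^[t] x := fun m => by
    rw [add_comm, iterate_add_apply, (hper.mul_const m).eq]
  by_contra hne
  refine hg (top_le_iff.1 ?_)
  calc ⊤ = ∑' _ : ℕ, g (f^[t] x) := (ENNReal.tsum_const_eq_top_of_ne_zero hne).symm
    _ = ∑' m, g (f^[t + d * m] x) := by simp only [hrec]
    _ ≤ ∑' n, g (f^[n] x) := ENNReal.tsum_comp_le_tsum_of_injective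
        ((add_right_injective t).comp (mul_right_injective₀ hd.ne')) _

section Paths

variable {S : Type*} {adj : S → S → Prop} {μ : S → ℝ} {μstar : ℝ} {p : ℕ → S} {m n : ℕ}

noncomputable def pathRegret (μ : S → ℝ) (μstar : ℝ) (p : ℕ → S) (n : ℕ) : ℝ :=
  ∑ t ∈ range n, (μstar - μ (p t))

lemma pathRegret_nonneg (hmax : ∀ u, μ u ≤ μstar) (p : ℕ → S) (n : ℕ) :
    0 ≤ pathRegret μ μstar p n :=
  sum_nonneg fun _ _ => sub_nonneg.2 (hmax _)

lemma pathRegret_mono (hmax : ∀ u, μ u ≤ μstar) (p : ℕ → S) (hmn : m ≤ n) :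
    pathRegret μ μstar p m ≤ pathRegret μ μstar p n :=
  sum_le_sum_of_subset_of_nonneg (range_subset_range.2 hmn) fun _ _ _ => sub_nonneg.2 (hmax _)

lemma pathRegret_le_mul (hμ0 : ∀ u, 0 ≤ μ u) (p : ℕ → S) (n : ℕ) :
    pathRegret μ μstar p n ≤ n * μstar :=
  calc pathRegret μ μstar p n ≤ ∑ _t ∈ range n, μstar :=
        sum_le_sum fun t _ => by linarith [hμ0 (p t)]
    _ = n * μstar := by simp

lemma mul_le_pathRegret {Δ : ℝ} (hmax : ∀ u, μ u ≤ μstar)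
    (hgap : ∀ u, μ u < μstar → μ u ≤ μstar - Δ) (hp : ∀ t < n, μ (p t) ≠ μstar) :
    n * Δ ≤ pathRegret μ μstar p n :=
  calc (n : ℝ) * Δ = ∑ _t ∈ range n, Δ := by simp
    _ ≤ pathRegret μ μstar p n := sum_le_sum fun t ht => by
        linarith [hgap _ ((hmax (p t)).lt_of_ne (hp t (mem_range.1 ht)))]

lemma Vpath_eq_sub_pathRegret (μ : S → ℝ) (μstar : ℝ) (p : ℕ → S) (T : ℕ) :
    Vpath μ p T = (T + 1) * μstar - pathRegret μ μstar p (T + 1) := by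
  simp [Vpath, pathRegret]

lemma Vpath_eq_Vopt_of_forall_pathRegret_le {s : S} {q : ℕ → S} {T : ℕ} (hq0 : q 0 = s)
    (hq : Adm adj q T) (hle : ∀ p : ℕ → S, p 0 = s → Adm adj p T →
      pathRegret μ μstar q (T + 1) ≤ pathRegret μ μstar p (T + 1)) :
    Vpath μ q T = Vopt adj μ s T := by
  rw [Vopt, eq_comm]
  refine IsGreatest.csSup_eq ⟨⟨q, hq0, hq, rfl⟩, ?_⟩
  rintro _ ⟨p, hp0, hp, rfl⟩
  rw [Vpath_eq_sub_pathRegret μ μstar, Vpath_eq_sub_pathRegret μ μstar]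
  linarith [hle p hp0 hp]

lemma Adm.mono_s11 (hp : Adm adj p n) (hmn : m ≤ n) : Adm adj p m :=
  fun t ht => hp t (by omega)

lemma adm_iterate {π : S → S} (hπ : ∀ u, adj u (π u)) (s : S) (n : ℕ) :
    Adm adj (fun t => π^[t] s) n :=
  fun _ _ => by simpa only [iterate_succ_apply'] using hπ _

/-- Cutting the loop `p i = p (i + d)` out of `p`. -/
lemma exists_shortcut (hmax : ∀ u, μ u ≤ μstar) {i d r : ℕ} (hp : Adm adj p (i + d + r))
    (hloop : p i = p (i + d)) :
    ∃ q : ℕ → S, q 0 = p 0 ∧ q (i + r) = p (i + d + r) ∧ Adm adj q (i + r) ∧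
      pathRegret μ μstar q (i + r) ≤ pathRegret μ μstar p (i + d + r) := by
  refine ⟨fun k => if k < i then p k else p (k + d), ?_, ?_, ?_, ?_⟩
  · dsimp only
    split_ifs with h
    · rfl
    · rw [Nat.eq_zero_of_not_pos h] at hloop
      simpa using hloop.symm
  · simp only [if_neg (show ¬ i + r < i by omega)]
    congr 1; omega
  · intro k hk
    by_cases hki : k + 1 < i
    · simpa [hki, show k < i by omega] using hp k (by omega)
    by_cases hk1 : k + 1 = i
    · simpa [show k < i by omega, hk1, ← hloop] using hp k (by omega)
    · simpa [show ¬ k < i by omega, hki, show k + 1 + d = k + d + 1 by omega]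
        using hp (k + d) (by omega)
  · have hsplit : ∀ k ∈ range r, μstar - μ (if i + k < i then p (i + k) else p (i + k + d)) =
        μstar - μ (p (i + d + k)) := fun k _ => by
      rw [if_neg (by omega), show i + k + d = i + d + k by omega]
    have hhead : ∀ k ∈ range i, μstar - μ (if k < i then p k else p (k + d)) = μstar - μ (p k) :=
      fun k hk => by rw [if_pos (mem_range.1 hk)]
    simp only [pathRegret, sum_range_add, sum_congr rfl hsplit, sum_congr rfl hhead]
    linarith [sum_nonneg fun k (_ : k ∈ range d) => sub_nonneg.2 (hmax (p (i + k)))]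

lemma exists_injOn_path_pathRegret_le (hmax : ∀ u, μ u ≤ μstar) (hp : Adm adj p n) :
    ∃ (q : ℕ → S) (m : ℕ), q 0 = p 0 ∧ q m = p n ∧ Adm adj q m ∧ Set.InjOn q (Set.Iic m) ∧
      pathRegret μ μstar q m ≤ pathRegret μ μstar p n := by
  induction n using Nat.strong_induction_on generalizing p with
  | _ n ih =>
    by_cases hinj : Set.InjOn p (Set.Iic n)
    · exact ⟨p, n, rfl, rfl, hp, hinj, le_rfl⟩
    obtain ⟨i, j, hij, hjn, hloop⟩ := exists_lt_le_eq_of_not_injOn hinj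
    have hn : n = i + (j - i) + (n - j) := by omega
    rw [hn] at hp ⊢
    obtain ⟨q, hq0, hqn, hq, hqle⟩ :=
      exists_shortcut hmax hp (by rwa [show i + (j - i) = j by omega])
    obtain ⟨q', m, hq'0, hq'm, hq', hinj', hq'le⟩ := ih (i + (n - j)) (by omega) hq
    exact ⟨q', m, hq'0.trans hq0, hq'm.trans hqn, hq', hinj', hq'le.trans hqle⟩

lemma exists_policy_iterate_eq (hrefl : ∀ u, adj u u) (hp : Adm adj p n)
    (hinj : Set.InjOn p (Set.Iic n)) :
    ∃ π : S → S, (∀ u, adj u (π u)) ∧ ∀ t, π^[t] (p 0) = p (min t n) := by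
  classical
  let π : S → S := fun u => if h : ∃ i < n, p i = u then p (h.choose + 1) else u
  have hchoose : ∀ t < n, ∀ h : ∃ i < n, p i = p t, h.choose = t := fun t ht h =>
    hinj (Set.mem_Iic.2 h.choose_spec.1.le) (Set.mem_Iic.2 ht.le) h.choose_spec.2
  have hstep : ∀ t < n, π (p t) = p (t + 1) := fun t ht => by
    simp only [π, dif_pos (⟨t, ht, rfl⟩ : ∃ i < n, p i = p t), hchoose t ht]
  have hfix : π (p n) = p n := by
    refine dif_neg ?_
    rintro ⟨i, hi, heq⟩
    exact hi.ne (hinj (Set.mem_Iic.2 hi.le) (Set.mem_Iic.2 le_rfl) heq)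
  refine ⟨π, fun u => ?_, fun t => ?_⟩
  · by_cases h : ∃ i < n, p i = u
    · simpa only [π, dif_pos h, h.choose_spec.2] using hp _ h.choose_spec.1
    · simpa only [π, dif_neg h] using hrefl u
  · induction t with
    | zero => simp
    | succ t ih =>
      rw [iterate_succ_apply', ih]
      rcases lt_or_ge t n with h | h
      · rw [min_eq_left h.le, hstep t h, min_eq_left h]
      · rw [min_eq_right h, hfix, min_eq_right (by omega)]

lemma Rinf_eq_ofReal_pathRegret (hmax : ∀ u, μ u ≤ μstar) {π : S → S} {s : S}
    (habs : ∀ t, n ≤ t → μ (π^[t] s) = μstar) :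
    Rinf μ μstar π s = ENNReal.ofReal (pathRegret μ μstar (fun t => π^[t] s) n) := by
  rw [Rinf, tsum_eq_sum (s := range n) fun t ht => by
      rw [habs t (by simpa using ht), sub_self, ENNReal.ofReal_zero],
    pathRegret, ENNReal.ofReal_sum_of_nonneg fun _ _ => sub_nonneg.2 (hmax _)]

lemma exists_policy_Rinf_le_pathRegret (hrefl : ∀ u, adj u u) (hmax : ∀ u, μ u ≤ μstar)
    (hp : Adm adj p n) (hn : μ (p n) = μstar) :
    ∃ π : S → S, (∀ u, adj u (π u)) ∧
      Rinf μ μstar π (p 0) ≤ ENNReal.ofReal (pathRegret μ μstar p n) := by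
  obtain ⟨q, m, hq0, hqm, hq, hinj, hle⟩ := exists_injOn_path_pathRegret_le hmax hp
  obtain ⟨π, hπ, hiter⟩ := exists_policy_iterate_eq hrefl hq hinj
  refine ⟨π, hπ, ?_⟩
  rw [← hq0, Rinf_eq_ofReal_pathRegret hmax (n := m) fun t ht => by
    rw [hiter, min_eq_right ht, hqm, hn]]
  refine ENNReal.ofReal_le_ofReal (le_trans (le_of_eq ?_) hle)
  exact sum_congr rfl fun t ht => by dsimp only; rw [hiter, min_eq_left (mem_range.1 ht).le]

lemma Rinf_le_pathRegret_of_optimal (hrefl : ∀ u, adj u u) (hmax : ∀ u, μ u ≤ μstar)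
    {π : S → S} {s : S}
    (hopt : ∀ π' : S → S, (∀ u, adj u (π' u)) → Rinf μ μstar π s ≤ Rinf μ μstar π' s)
    (hp0 : p 0 = s) (hp : Adm adj p n) (hn : μ (p n) = μstar) :
    Rinf μ μstar π s ≤ ENNReal.ofReal (pathRegret μ μstar p n) := by
  obtain ⟨π', hπ', hle⟩ := exists_policy_Rinf_le_pathRegret hrefl hmax hp hn
  exact (hopt π' hπ').trans (hp0 ▸ hle)

lemma iterate_optimal_of_Rinf_ne_top [Fintype S] (hmax : ∀ u, μ u ≤ μstar) {π : S → S} {s : S}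
    (hfin : Rinf μ μstar π s ≠ ⊤) {t : ℕ} (ht : Fintype.card S ≤ t) : μ (π^[t] s) = μstar := by
  have := iterate_eq_zero_of_tsum_ne_top π s (g := fun u => ENNReal.ofReal (μstar - μ u)) hfin ht
  linarith [hmax (π^[t] s), ENNReal.ofReal_eq_zero.1 this]

end Paths

lemma mul_le_TG_mul (D : ℕ) (μstar : ℝ) {Δ : ℝ} (hΔ : 0 < Δ) :
    D * μstar ≤ TG D μstar Δ * Δ :=
  (div_le_iff₀ hΔ).1 (Nat.le_ceil _)

theorem Rinf_optimal_implies_finite_optimal_general {S : Type*} [Fintype S]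
    (adj : S → S → Prop) (hrefl : ∀ s, adj s s)
    (μ : S → ℝ) (hμ0 : ∀ s, 0 ≤ μ s)
    (μstar : ℝ) (hmax : ∀ s, μ s ≤ μstar) (hex : ∃ s, μ s = μstar)
    (Δ : ℝ) (hΔ : 0 < Δ) (hgap : ∀ s, μ s < μstar → μ s ≤ μstar - Δ)
    (D : ℕ)
    (hD : ∀ s s' : S, ∃ (T : ℕ) (p : ℕ → S),
      T ≤ D ∧ p 0 = s ∧ p T = s' ∧ Adm adj p T)
    (π : S → S) (hπ : ∀ s, adj s (π s)) (s : S)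
    (hopt : ∀ π' : S → S, (∀ u, adj u (π' u)) →
      Rinf μ μstar π s ≤ Rinf μ μstar π' s) :
    ∀ T, TG D μstar Δ + Fintype.card S ≤ T →
      Vpath μ (fun t => π^[t] s) T = Vopt adj μ s T := by
  intro T hT
  obtain ⟨sstar, hsstar⟩ := hex
  obtain ⟨T₀, p₀, hT₀, hp₀0, hp₀T, hp₀⟩ := hD s sstar
  have hbound : Rinf μ μstar π s ≤ ENNReal.ofReal (D * μstar) :=
    (Rinf_le_pathRegret_of_optimal hrefl hmax hopt hp₀0 hp₀ (hp₀T ▸ hsstar)).trans <|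
      ENNReal.ofReal_le_ofReal <| (pathRegret_le_mul hμ0 p₀ T₀).trans <|
        mul_le_mul_of_nonneg_right (by exact_mod_cast hT₀) ((hμ0 s).trans (hmax s))
  have hR : Rinf μ μstar π s = ENNReal.ofReal (pathRegret μ μstar (fun t => π^[t] s) (T + 1)) :=
    Rinf_eq_ofReal_pathRegret hmax fun t ht =>
      iterate_optimal_of_Rinf_ne_top hmax (ne_top_of_le_ne_top ENNReal.ofReal_ne_top hbound)
        (by omega)
  refine Vpath_eq_Vopt_of_forall_pathRegret_le (μstar := μstar) rfl (adm_iterate hπ s T) fun p hp0 hp => ?_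
  rw [← ENNReal.ofReal_le_ofReal_iff (pathRegret_nonneg hmax p _), ← hR]
  by_cases hvisit : ∃ t ≤ T, μ (p t) = μstar
  · obtain ⟨t, htT, ht⟩ := hvisit
    exact (Rinf_le_pathRegret_of_optimal hrefl hmax hopt hp0 (hp.mono_s11 htT) ht).trans
      (ENNReal.ofReal_le_ofReal (pathRegret_mono hmax p (by omega)))
  · refine hbound.trans (ENNReal.ofReal_le_ofReal ?_)
    calc (D : ℝ) * μstar ≤ TG D μstar Δ * Δ := mul_le_TG_mul D μstar hΔ
      _ ≤ ((T + 1 : ℕ) : ℝ) * Δ := by gcongr; omega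
      _ ≤ pathRegret μ μstar p (T + 1) :=
        mul_le_pathRegret hmax hgap fun t ht h => hvisit ⟨t, by omega, h⟩

/-- If a stationary policy `π` minimizes the infinite-horizon undiscounted
regret `R_∞(·, s)`, then it achieves the optimal cumulative reward `V(s, T)`
for every finite horizon `T ≥ T_G + |S|`. -/
theorem Rinf_optimal_implies_finite_optimal {S : Type*} [Fintype S] [Nonempty S]
    (adj : S → S → Prop) (hrefl : ∀ s, adj s s) (hsymm : ∀ s t, adj s t → adj t s)
    (μ : S → ℝ) (hμ0 : ∀ s, 0 ≤ μ s)
    (μstar : ℝ) (hmax : ∀ s, μ s ≤ μstar) (hex : ∃ s, μ s = μstar)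
    (Δ : ℝ) (hΔ : 0 < Δ) (hgap : ∀ s, μ s < μstar → μ s ≤ μstar - Δ)
    (D : ℕ)
    (hD : ∀ s s' : S, ∃ (T : ℕ) (p : ℕ → S),
      T ≤ D ∧ p 0 = s ∧ p T = s' ∧ Adm adj p T)
    (π : S → S) (hπ : ∀ s, adj s (π s)) (s : S)
    (hopt : ∀ π' : S → S, (∀ u, adj u (π' u)) →
      Rinf μ μstar π s ≤ Rinf μ μstar π' s) :
    ∀ T, TG D μstar Δ + Fintype.card S ≤ T →
      Vpath μ (fun t => π^[t] s) T = Vopt adj μ s T :=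
  Rinf_optimal_implies_finite_optimal_general adj hrefl μ hμ0 μstar hmax hex Δ hΔ hgap D hD π hπ s
    hopt
end
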